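/- Let A be finite with 0 ≤ ℓ ≤ u, 𝒫 finite, and S ⊆ 𝒫 an essential scenario-covering set. Then no distinct P, P' ∈ S satisfy P' ⪯ P (weak dominance) or P ∼ P' (equivalence under all scenarios). Conversely, if S is scenario-covering and for all distinct P, P' ∈ S neither P' ⪯ P nor P ∼ P' holds, then S is essential. -/
import Mathlib


open Finset

noncomputable def cost {A : Type*} (c : A → ℝ) (Q : Finset A) : ℝ := ∑ a ∈ Q, c a

noncomputable def best {A : Type*} [DecidableEq A] (ℓ u : A → ℝ) (P : Finset A) : A → ℝ :=
  fun a => if a ∈ P then ℓ a else u a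

def IsScenario {A : Type*} (ℓ u c : A → ℝ) : Prop := ∀ a, ℓ a ≤ c a ∧ c a ≤ u a

def ScenarioCovering {A : Type*} (ℓ u : A → ℝ) (Ps S : Finset (Finset A)) : Prop :=
  ∀ c : A → ℝ, IsScenario ℓ u c → ∃ P ∈ S, ∀ P' ∈ Ps, cost c P ≤ cost c P'

def Essential {A : Type*} (ℓ u : A → ℝ) (Ps S : Finset (Finset A)) : Prop :=
  ScenarioCovering ℓ u Ps S ∧ ∀ T ⊂ S, ¬ ScenarioCovering ℓ u Ps T

def WeaklyDominates {A : Type*} (ℓ u : A → ℝ) (P P' : Finset A) : Prop :=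
  (∀ c : A → ℝ, IsScenario ℓ u c → cost c P ≤ cost c P') ∧
  ∃ c' : A → ℝ, IsScenario ℓ u c' ∧ cost c' P < cost c' P'

def EquivPaths {A : Type*} (ℓ u : A → ℝ) (P P' : Finset A) : Prop :=
  ∀ c : A → ℝ, IsScenario ℓ u c → cost c P = cost c P'

lemma cost_best_eq {A : Type*} [DecidableEq A] (ℓ u : A → ℝ) (P Q : Finset A) :
    cost (best ℓ u P) Q = ∑ a ∈ Q ∩ P, ℓ a + ∑ a ∈ Q \ P, u a := by
  rw [cost, ← Finset.sum_inter_add_sum_sdiff Q P]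
  congr 1
  · exact Finset.sum_congr rfl fun a ha => if_pos (Finset.mem_inter.1 ha).2
  · exact Finset.sum_congr rfl fun a ha => if_neg (Finset.mem_sdiff.1 ha).2

lemma best_isScenario {A : Type*} [DecidableEq A] (ℓ u : A → ℝ) (hlu : ∀ a, ℓ a ≤ u a)
    (P : Finset A) : IsScenario ℓ u (best ℓ u P) := by
  intro a
  unfold best
  by_cases h : a ∈ P <;> simp [h, hlu a]

lemma key {A : Type*} [DecidableEq A] (ℓ u : A → ℝ) (hlu : ∀ a, ℓ a ≤ u a)
    (P P' : Finset A)
    (h : cost (best ℓ u P) P' ≤ cost (best ℓ u P) P) :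
    ∀ c, IsScenario ℓ u c → cost c P' ≤ cost c P := by
  have e1 := cost_best_eq ℓ u P P'
  have e2 := cost_best_eq ℓ u P P
  have e3 : ∑ a ∈ P ∩ P', ℓ a + ∑ a ∈ P \ P', ℓ a = ∑ a ∈ P ∩ P, ℓ a + ∑ a ∈ P \ P, ℓ a := by
    rw [Finset.sum_inter_add_sum_sdiff, Finset.sum_inter_add_sum_sdiff]
  have e4 : ∑ a ∈ P' ∩ P, ℓ a = ∑ a ∈ P ∩ P', ℓ a := by rw [Finset.inter_comm]
  have e5 : ∑ a ∈ P \ P, u a = 0 := by simp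
  have e6 : ∑ a ∈ P \ P, ℓ a = 0 := by simp
  have h1 : ∑ a ∈ P' \ P, u a ≤ ∑ a ∈ P \ P', ℓ a := by linarith
  intro c hc
  have d1 : cost c P' = ∑ a ∈ P' ∩ P, c a + ∑ a ∈ P' \ P, c a :=
    (Finset.sum_inter_add_sum_sdiff P' P c).symm
  have d2 : cost c P = ∑ a ∈ P ∩ P', c a + ∑ a ∈ P \ P', c a :=
    (Finset.sum_inter_add_sum_sdiff P P' c).symm
  have d3 : ∑ a ∈ P' ∩ P, c a = ∑ a ∈ P ∩ P', c a := by rw [Finset.inter_comm]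
  have d4 : ∑ a ∈ P' \ P, c a ≤ ∑ a ∈ P' \ P, u a :=
    Finset.sum_le_sum fun a _ => (hc a).2
  have d5 : ∑ a ∈ P \ P', ℓ a ≤ ∑ a ∈ P \ P', c a :=
    Finset.sum_le_sum fun a _ => (hc a).1
  linarith

theorem stmt15 {A : Type*} [Fintype A] [DecidableEq A] (ℓ u : A → ℝ)
    (h0 : ∀ a, 0 ≤ ℓ a) (hlu : ∀ a, ℓ a ≤ u a)
    (Ps S : Finset (Finset A)) (hSPs : S ⊆ Ps) :
    (Essential ℓ u Ps S →
      ∀ P ∈ S, ∀ P' ∈ S, P ≠ P' →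
        ¬ WeaklyDominates ℓ u P' P ∧ ¬ EquivPaths ℓ u P P') ∧
    (ScenarioCovering ℓ u Ps S →
      (∀ P ∈ S, ∀ P' ∈ S, P ≠ P' →
        ¬ WeaklyDominates ℓ u P' P ∧ ¬ EquivPaths ℓ u P P') →
      Essential ℓ u Ps S) := by
  classical
  -- helper: if S covers and P' ∈ S is at least as good as P ∈ S in every scenario,
  -- then erasing P keeps covering
  have main : ScenarioCovering ℓ u Ps S → ∀ P ∈ S, ∀ P' ∈ S, P ≠ P' →
      (∀ c, IsScenario ℓ u c → cost c P' ≤ cost c P) →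
      ScenarioCovering ℓ u Ps (S.erase P) := by
    intro hcov P hP P' hP' hne hle c hc
    obtain ⟨Q, hQ, hQmin⟩ := hcov c hc
    by_cases hQP : Q = P
    · exact ⟨P', Finset.mem_erase.2 ⟨fun h => hne h.symm, hP'⟩,
        fun R hR => le_trans (hle c hc) (hQP ▸ hQmin R hR)⟩
    · exact ⟨Q, Finset.mem_erase.2 ⟨hQP, hQ⟩, hQmin⟩
  constructor
  · rintro ⟨hcov, hmin⟩ P hP P' hP' hne
    constructor
    · rintro ⟨hwd, -⟩
      exact hmin (S.erase P) (Finset.erase_ssubset hP)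
        (main hcov P hP P' hP' hne hwd)
    · intro heq
      exact hmin (S.erase P) (Finset.erase_ssubset hP)
        (main hcov P hP P' hP' hne (fun c hc => le_of_eq (heq c hc).symm))
  · intro hcov hpair
    refine ⟨hcov, fun T hT hTcov => ?_⟩
    obtain ⟨P, hPS, hPT⟩ := Finset.exists_of_ssubset hT
    obtain ⟨P', hP'T, hP'min⟩ := hTcov (best ℓ u P) (best_isScenario ℓ u hlu P)
    have hP'S : P' ∈ S := hT.subset hP'T
    have hne : P ≠ P' := fun h => hPT (h ▸ hP'T)
    have hle : ∀ c, IsScenario ℓ u c → cost c P' ≤ cost c P :=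
      key ℓ u hlu P P' (hP'min P (hSPs hPS))
    obtain ⟨hnwd, hneq⟩ := hpair P hPS P' hP'S hne
    by_cases hstrict : ∃ c, IsScenario ℓ u c ∧ cost c P' < cost c P
    · obtain ⟨c, hc, hlt⟩ := hstrict
      exact hnwd ⟨hle, c, hc, hlt⟩
    · push_neg at hstrict
      exact hneq fun c hc => le_antisymm (hstrict c hc) (hle c hc)
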